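/- arXiv:0908.0776 — 4 statements merged into one kernel-verified Lean document; each statement's English description precedes it below -/
import Mathlib

section
/- Let c : (0,∞) → [0,∞) with ∫₀^∞ c(s)²/s ds ≤ E, and let 0 < s₋ ≤ s₊ and j ≥ 1 a natural number. Then the iterated integral over the ordered simplex satisfies ∫_{s₋ ≤ s₁ ≤ ⋯ ≤ s_j ≤ s₊} (c(s₁)/s₁)⋯(c(s_j)/s_j) ds₁⋯ds_j ≤ E^{j/2} (log(s₊/s₋))^{j/2} / j!. -/
/-!
By Cauchy–Schwarz against the weight `1/s`, `∫_{s₋}^{s₊} c(s)/s ds ≤ E^{1/2} log(s₊/s₋)^{1/2}`.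
The `j!` images of the ordered simplex under the coordinate permutations are, up to the
null set where two coordinates agree, disjoint and cover the cube `[s₋, s₊]^j`. The integrand
`∏ᵢ c(sᵢ)/sᵢ` is symmetric, so `j!` times the simplex integral is at most the cube integral,
which is the `j`-th power of the one-dimensional one.
-/

open MeasureTheory Set

lemma measurableSet_setOf_strictMono_comp {ι : Type*} [Countable ι] [Preorder ι]
    (σ : Equiv.Perm ι) : MeasurableSet {x : ι → ℝ | StrictMono (x ∘ σ)} := by
  have h : {x : ι → ℝ | StrictMono (x ∘ σ)} = ⋂ (a) (b) (_ : a < b), {x | x (σ a) < x (σ b)} := by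
    ext x; simp [StrictMono]
  rw [h]
  exact .iInter fun a => .iInter fun b => .iInter fun _ =>
    measurableSet_lt (measurable_pi_apply _) (measurable_pi_apply _)

lemma measurableSet_setOf_mem_Icc_and_monotone {ι : Type*} [Countable ι] [Preorder ι]
    (a b : ℝ) : MeasurableSet {x : ι → ℝ | (∀ i, x i ∈ Icc a b) ∧ Monotone x} := by
  rw [ofPred_and, ofPred_forall]
  exact .inter (.iInter fun i => measurableSet_Icc.preimage (measurable_pi_apply i))
    isClosed_monotone.measurableSet

lemma volume_setOf_apply_eq_apply {ι : Type*} [Fintype ι] {a b : ι} (hab : a ≠ b) :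
    volume {x : ι → ℝ | x a = x b} = 0 := by
  classical
  let ℓ : (ι → ℝ) →ₗ[ℝ] ℝ := (LinearMap.proj a : (ι → ℝ) →ₗ[ℝ] ℝ) - LinearMap.proj b
  have hker : {x : ι → ℝ | x a = x b} = LinearMap.ker ℓ := by
    ext x; simp [ℓ, sub_eq_zero]
  rw [hker]
  refine Measure.addHaar_submodule _ _ fun htop => ?_
  have : Pi.single a (1 : ℝ) ∈ LinearMap.ker ℓ := htop ▸ Submodule.mem_top
  simp [ℓ, hab.symm] at this

lemma pairwise_disjoint_setOf_strictMono_comp {ι : Type*} [Finite ι] [LinearOrder ι] :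
    Pairwise (Function.onFun Disjoint
      fun σ : Equiv.Perm ι => {x : ι → ℝ | StrictMono (x ∘ σ)}) := by
  intro σ τ hne
  refine disjoint_left.2 fun x (hσ : StrictMono (x ∘ σ)) (hτ : StrictMono (x ∘ τ)) => hne ?_
  have hinj : Function.Injective x := by
    simpa using hσ.injective.comp σ.symm.injective
  have hrange : range (x ∘ σ) = range (x ∘ τ) := by
    rw [range_comp, range_comp, Equiv.range_eq_univ, Equiv.range_eq_univ]
  have : x ∘ σ = x ∘ τ := (hσ.range_inj hτ).1 hrange
  exact Equiv.ext fun i => hinj (congrFun this i)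

section OrderedSimplex

variable {ι : Type*} [Fintype ι] [LinearOrder ι]

lemma setOf_monotone_ae_eq_setOf_strictMono :
    {x : ι → ℝ | Monotone x} =ᵐ[volume] {x | StrictMono x} := by
  have hsub : {x : ι → ℝ | Monotone x} \ {x | StrictMono x} ⊆
      ⋃ p : {p : ι × ι // p.1 ≠ p.2}, {x | x p.1.1 = x p.1.2} := by
    rintro x ⟨hmono, hstrict⟩
    obtain ⟨a, b, hab, hba⟩ : ∃ a b, a < b ∧ ¬ x a < x b := by
      simpa [StrictMono] using hstrict
    exact mem_iUnion.2 ⟨⟨(a, b), hab.ne⟩, le_antisymm (hmono hab.le) (not_lt.1 hba)⟩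
  refine ae_eq_set.2 ⟨measure_mono_null hsub (measure_iUnion_null fun p => ?_), ?_⟩
  · exact volume_setOf_apply_eq_apply p.2
  · exact measure_mono_null (fun x hx => hx.2 hx.1.monotone) measure_empty

lemma setIntegral_setOf_strictMono_comp (F : ℝ → ℝ) (σ : Equiv.Perm ι) :
    ∫ x in {x : ι → ℝ | StrictMono (x ∘ σ)}, ∏ i, F (x i) =
      ∫ x in {x : ι → ℝ | StrictMono x}, ∏ i, F (x i) := by
  let T := MeasurableEquiv.arrowCongr' σ.symm (MeasurableEquiv.refl ℝ)
  have hT : ∀ x, T x = x ∘ σ := fun x => rfl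
  have hpres : MeasurePreserving T :=
    volume_preserving_arrowCongr' (α₁ := ι) (α₂ := ι) σ.symm (MeasurableEquiv.refl ℝ) (.id volume)
  calc ∫ x in {x : ι → ℝ | StrictMono (x ∘ σ)}, ∏ i, F (x i)
      = ∫ x in T ⁻¹' {x | StrictMono x}, ∏ i, F (T x i) :=
        setIntegral_congr_fun (measurableSet_setOf_strictMono_comp σ) fun x _ =>
          (Equiv.prod_comp σ fun i => F (x i)).symm
    _ = ∫ x in {x : ι → ℝ | StrictMono x}, ∏ i, F (x i) :=
        hpres.setIntegral_preimage_emb T.measurableEmbedding (fun x => ∏ i, F (x i)) _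

theorem factorial_mul_setIntegral_monotone_le {F : ℝ → ℝ} (hF0 : ∀ s, 0 ≤ F s)
    (hF : Integrable F) :
    (Fintype.card ι).factorial * ∫ x in {x : ι → ℝ | Monotone x}, ∏ i, F (x i) ≤
      (∫ s, F s) ^ Fintype.card ι := by
  have hG : Integrable fun x : ι → ℝ => ∏ i, F (x i) := .fintype_prod fun _ => hF
  calc (Fintype.card ι).factorial * ∫ x in {x : ι → ℝ | Monotone x}, ∏ i, F (x i)
      = ∑ σ : Equiv.Perm ι, ∫ x in {x : ι → ℝ | StrictMono (x ∘ σ)}, ∏ i, F (x i) := by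
        simp only [setIntegral_setOf_strictMono_comp, Finset.sum_const, Finset.card_univ,
          Fintype.card_perm, nsmul_eq_mul,
          setIntegral_congr_set setOf_monotone_ae_eq_setOf_strictMono]
    _ = ∫ x in ⋃ σ : Equiv.Perm ι, {x : ι → ℝ | StrictMono (x ∘ σ)}, ∏ i, F (x i) :=
        (integral_iUnion_fintype measurableSet_setOf_strictMono_comp
          pairwise_disjoint_setOf_strictMono_comp fun _ => hG.integrableOn).symm
    _ ≤ ∫ x : ι → ℝ, ∏ i, F (x i) :=
        setIntegral_le_integral hG (.of_forall fun x => Finset.prod_nonneg fun i _ => hF0 _)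
    _ = (∫ s, F s) ^ Fintype.card ι := integral_fintype_prod_volume_eq_pow F

theorem setIntegral_monotone_Icc_le {f : ℝ → ℝ} {a b : ℝ} (hf0 : ∀ s ∈ Icc a b, 0 ≤ f s)
    (hf : IntegrableOn f (Icc a b)) :
    ∫ x in {x : ι → ℝ | (∀ i, x i ∈ Icc a b) ∧ Monotone x}, ∏ i, f (x i) ≤
      (∫ s in Icc a b, f s) ^ Fintype.card ι / (Fintype.card ι).factorial := by
  set F := (Icc a b).indicator f
  have hF0 : ∀ s, 0 ≤ F s := indicator_nonneg hf0
  have hF : Integrable F := (integrable_indicator_iff measurableSet_Icc).2 hf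
  rw [← integral_indicator measurableSet_Icc, le_div_iff₀ (by positivity), mul_comm]
  refine le_trans ?_ (factorial_mul_setIntegral_monotone_le hF0 hF)
  gcongr
  calc ∫ x in {x : ι → ℝ | (∀ i, x i ∈ Icc a b) ∧ Monotone x}, ∏ i, f (x i)
      = ∫ x in {x : ι → ℝ | (∀ i, x i ∈ Icc a b) ∧ Monotone x}, ∏ i, F (x i) :=
        setIntegral_congr_fun (measurableSet_setOf_mem_Icc_and_monotone a b) fun x hx =>
          Finset.prod_congr rfl fun i _ => (indicator_of_mem (hx.1 i) _).symm
    _ ≤ ∫ x in {x : ι → ℝ | Monotone x}, ∏ i, F (x i) :=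
        setIntegral_mono_set (Integrable.fintype_prod fun _ => hF).integrableOn
          (.of_forall fun x => Finset.prod_nonneg fun i _ => hF0 _)
          (Filter.Eventually.of_forall fun _ hx => hx.2)

end OrderedSimplex

lemma memLp_two_div_sqrt {μ : Measure ℝ} {f : ℝ → ℝ} (hf : AEMeasurable f μ)
    (hint : Integrable (fun s => f s ^ 2 / s) μ) (hpos : ∀ᵐ s ∂μ, 0 ≤ s) :
    MemLp (fun s => f s / √s) 2 μ := by
  refine (memLp_two_iff_integrable_sq
    (hf.div Real.continuous_sqrt.measurable.aemeasurable).aestronglyMeasurable).2 (hint.congr ?_)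
  filter_upwards [hpos] with s hs
  rw [Pi.div_apply, div_pow, Real.sq_sqrt hs]

section LogarithmicCauchySchwarz

variable {a b : ℝ} {c : ℝ → ℝ}

lemma integrableOn_one_div_Icc (ha : 0 < a) : IntegrableOn (fun s : ℝ => 1 / s) (Icc a b) :=
  (continuousOn_const.div continuousOn_id fun _ hs => (ha.trans_le hs.1).ne').integrableOn_Icc

lemma memLp_two_div_sqrt_Icc (ha : 0 < a) (hc : Measurable c)
    (hint : IntegrableOn (fun s => c s ^ 2 / s) (Icc a b)) :
    MemLp (fun s => c s / √s) 2 (volume.restrict (Icc a b)) :=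
  memLp_two_div_sqrt hc.aemeasurable hint <|
    ae_restrict_of_forall_mem measurableSet_Icc fun _ hs => ha.le.trans hs.1

lemma memLp_two_one_div_sqrt_Icc (ha : 0 < a) :
    MemLp (fun s => 1 / √s) 2 (volume.restrict (Icc a b)) :=
  memLp_two_div_sqrt_Icc ha measurable_const (by simpa using integrableOn_one_div_Icc ha)

lemma div_sqrt_mul_one_div_sqrt {s : ℝ} (hs : 0 < s) (x : ℝ) : x / √s * (1 / √s) = x / s := by
  rw [div_mul_div_comm, mul_one, Real.mul_self_sqrt hs.le]

lemma integrableOn_div_Icc (ha : 0 < a) (hc : Measurable c)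
    (hint : IntegrableOn (fun s => c s ^ 2 / s) (Icc a b)) :
    IntegrableOn (fun s => c s / s) (Icc a b) := by
  refine ((memLp_two_div_sqrt_Icc ha hc hint).integrable_mul
    (memLp_two_one_div_sqrt_Icc ha)).congr ?_
  filter_upwards [ae_restrict_mem measurableSet_Icc] with s hs
  exact div_sqrt_mul_one_div_sqrt (ha.trans_le hs.1) (c s)

theorem setIntegral_Icc_div_le (ha : 0 < a) (hab : a ≤ b) (hc0 : ∀ s ∈ Icc a b, 0 ≤ c s)
    (hc : Measurable c) (hint : IntegrableOn (fun s => c s ^ 2 / s) (Icc a b)) :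
    ∫ s in Icc a b, c s / s ≤
      (∫ s in Icc a b, c s ^ 2 / s) ^ (1 / 2 : ℝ) * Real.log (b / a) ^ (1 / 2 : ℝ) := by
  have hpos : ∀ᵐ s ∂volume.restrict (Icc a b), s ∈ Icc a b ∧ 0 < s :=
    ae_restrict_of_forall_mem measurableSet_Icc fun s hs => ⟨hs, ha.trans_le hs.1⟩
  have hsq : ∀ f : ℝ → ℝ, ∀ᵐ s ∂volume.restrict (Icc a b), (f s / √s) ^ (2 : ℝ) = f s ^ 2 / s := by
    intro f
    filter_upwards [hpos] with s hs
    rw [Real.rpow_two, div_pow, Real.sq_sqrt hs.2.le]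
  have hlog : ∫ s in Icc a b, 1 / s = Real.log (b / a) := by
    rw [integral_Icc_eq_integral_Ioc, ← intervalIntegral.integral_of_le hab,
      integral_one_div_of_pos ha (ha.trans_le hab)]
  have hCS := integral_mul_le_Lp_mul_Lq_of_nonneg Real.HolderConjugate.two_two
    (f := fun s => c s / √s) (g := fun s => 1 / √s)
    (by filter_upwards [hpos] with s hs using div_nonneg (hc0 s hs.1) (Real.sqrt_nonneg s))
    (.of_forall fun s => div_nonneg zero_le_one (Real.sqrt_nonneg s))
    (by simpa using memLp_two_div_sqrt_Icc ha hc hint)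
    (by simpa using memLp_two_one_div_sqrt_Icc (b := b) ha)
  calc ∫ s in Icc a b, c s / s
      = ∫ s in Icc a b, c s / √s * (1 / √s) :=
        setIntegral_congr_fun measurableSet_Icc fun s hs =>
          (div_sqrt_mul_one_div_sqrt (ha.trans_le hs.1) (c s)).symm
    _ ≤ _ := hCS
    _ = _ := by
        rw [integral_congr_ae (hsq c), integral_congr_ae (hsq fun _ => 1), one_pow, hlog]

end LogarithmicCauchySchwarz

theorem stmt2_general (c : ℝ → ℝ) (E : ℝ)
    (hc : ∀ s, 0 < s → 0 ≤ c s)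
    (hmeas : Measurable c)
    (hE0 : 0 ≤ E)
    (hint : IntegrableOn (fun s => (c s) ^ 2 / s) (Set.Ioi 0))
    (hE : (∫ s in Set.Ioi (0 : ℝ), (c s) ^ 2 / s) ≤ E)
    (sm sp : ℝ) (hsm : 0 < sm) (hsmsp : sm ≤ sp)
    (j : ℕ) :
    (∫ x in {x : Fin j → ℝ | (∀ i, x i ∈ Set.Icc sm sp) ∧ Monotone x},
        ∏ i, c (x i) / x i)
      ≤ E ^ ((j : ℝ) / 2) * (Real.log (sp / sm)) ^ ((j : ℝ) / 2) / (Nat.factorial j) := by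
  have hIcc : Icc sm sp ⊆ Ioi 0 := fun s hs => hsm.trans_le hs.1
  have hL : 0 ≤ Real.log (sp / sm) := Real.log_nonneg ((one_le_div hsm).2 hsmsp)
  have hc0 : ∀ s ∈ Icc sm sp, 0 ≤ c s / s := fun s hs => div_nonneg (hc s (hIcc hs)) (hIcc hs).le
  have hcIcc : ∫ s in Icc sm sp, c s ^ 2 / s ≤ E :=
    (setIntegral_mono_set hint (ae_restrict_of_forall_mem measurableSet_Ioi fun s hs =>
      div_nonneg (sq_nonneg _) hs.le) hIcc.eventuallyLE).trans hE
  have hcs : ∫ s in Icc sm sp, c s / s ≤ E ^ (1 / 2 : ℝ) * Real.log (sp / sm) ^ (1 / 2 : ℝ) :=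
    (setIntegral_Icc_div_le hsm hsmsp (fun s hs => hc s (hIcc hs)) hmeas
      (hint.mono_set hIcc)).trans <| by
        gcongr
        exact setIntegral_nonneg measurableSet_Icc fun s hs => div_nonneg (sq_nonneg _) (hIcc hs).le
  calc (∫ x in {x : Fin j → ℝ | (∀ i, x i ∈ Icc sm sp) ∧ Monotone x}, ∏ i, c (x i) / x i)
      ≤ (∫ s in Icc sm sp, c s / s) ^ j / j.factorial := by
        simpa using setIntegral_monotone_Icc_le (ι := Fin j) hc0
          (integrableOn_div_Icc hsm hmeas (hint.mono_set hIcc))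
    _ ≤ (E ^ (1 / 2 : ℝ) * Real.log (sp / sm) ^ (1 / 2 : ℝ)) ^ j / j.factorial := by
        gcongr
        exact setIntegral_nonneg measurableSet_Icc hc0
    _ = E ^ ((j : ℝ) / 2) * Real.log (sp / sm) ^ ((j : ℝ) / 2) / j.factorial := by
        rw [mul_pow, ← Real.rpow_mul_natCast hE0, ← Real.rpow_mul_natCast hL, one_div_mul_eq_div]

/-- **Iterated envelope integral over the ordered simplex.**
If `∫₀^∞ c(s)²/s ds ≤ E`, then for `0 < s₋ ≤ s₊` and `j ≥ 1`,
`∫_{s₋ ≤ s₁ ≤ ⋯ ≤ s_j ≤ s₊} ∏ᵢ c(sᵢ)/sᵢ ≤ E^{j/2} (log(s₊/s₋))^{j/2} / j!`. -/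
theorem stmt2 (c : ℝ → ℝ) (E : ℝ)
    (hc : ∀ s, 0 < s → 0 ≤ c s)
    (hmeas : Measurable c)
    (hE0 : 0 ≤ E)
    (hint : IntegrableOn (fun s => (c s) ^ 2 / s) (Set.Ioi 0))
    (hE : (∫ s in Set.Ioi (0 : ℝ), (c s) ^ 2 / s) ≤ E)
    (sm sp : ℝ) (hsm : 0 < sm) (hsmsp : sm ≤ sp)
    (j : ℕ) (hj : 1 ≤ j) :
    (∫ x in {x : Fin j → ℝ | (∀ i, x i ∈ Set.Icc sm sp) ∧ Monotone x},
        ∏ i, c (x i) / x i)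
      ≤ E ^ ((j : ℝ) / 2) * (Real.log (sp / sm)) ^ ((j : ℝ) / 2) / (Nat.factorial j) :=
  stmt2_general c E hc hmeas hE0 hint hE sm sp hsm hsmsp j
end

section
/- Define ‖u‖_{A^m(s)} := Σ_{j=0}^m s^{j/2}‖∇_x^j u‖_{L^∞(ℝ²)} + s^{(j+1)/2}‖∇_x^{j+1}u‖_{L²(ℝ²)} for Schwartz u on ℝ² and s > 0. Then for every m ≥ 0 there is a constant C_m such that ‖uv‖_{A^m(s)} ≤ C_m ‖u‖_{A^m(s)} ‖v‖_{A^m(s)} for all Schwartz u, v. -/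
open MeasureTheory Set

noncomputable section

/-- The scale-weighted Sobolev-type norm
`‖u‖_{A^m(s)} = ∑_{j=0}^m s^{j/2}‖∇^j u‖_{L^∞} + s^{(j+1)/2}‖∇^{j+1}u‖_{L²}`. -/
def Anorm (m : ℕ) (s : ℝ) (u : EuclideanSpace ℝ (Fin 2) → ℂ) : ℝ :=
  ∑ j ∈ Finset.range (m + 1),
    (s ^ ((j : ℝ) / 2) * (eLpNorm (fun x => ‖iteratedFDeriv ℝ j u x‖) ⊤ volume).toReal
      + s ^ (((j : ℝ) + 1) / 2)
          * (eLpNorm (fun x => ‖iteratedFDeriv ℝ (j + 1) u x‖) 2 volume).toReal)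

open scoped ENNReal

/-!
Leibniz's rule bounds `|∇^k (uv)|` pointwise by `∑ᵢ (k choose i) |∇^i u| |∇^(k-i) v|`, the weight
`s^(k/2)` splits as `s^(i/2) s^((k-i)/2)`, and Hölder's inequality puts one factor in `L^∞` and
the other in `L^p`. Every resulting factor is a summand of the `A^m(s)` norm, provided that in an
`L²` term of order `j + 1` the factor carrying at least one derivative is the one put in `L²`.
-/

section ScaledNorms

variable {E F A : Type*} [NormedAddCommGroup E] [NormedSpace ℝ E]
  [NormedAddCommGroup F] [NormedSpace ℝ F] [NormedRing A] [NormedAlgebra ℝ A]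
  {s : ℝ}

lemma continuous_norm_iteratedFDeriv {n : WithTop ℕ∞} {f : E → F} (hf : ContDiff ℝ n f) {i : ℕ}
    (hi : i ≤ n) : Continuous fun x => ‖iteratedFDeriv ℝ i f x‖ :=
  (hf.continuous_iteratedFDeriv hi).norm

lemma ofReal_rpow_half_eq_mul (hs : 0 ≤ s) {i k : ℕ} (hik : i ≤ k) :
    ENNReal.ofReal (s ^ ((k : ℝ) / 2)) =
      ENNReal.ofReal (s ^ ((i : ℝ) / 2)) * ENNReal.ofReal (s ^ (((k - i : ℕ) : ℝ) / 2)) := by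
  rw [← ENNReal.ofReal_mul (Real.rpow_nonneg hs _),
    ← Real.rpow_add_of_nonneg hs (by positivity) (by positivity), Nat.cast_sub hik]
  ring_nf

variable [MeasurableSpace E] {μ : Measure E} {p : ℝ≥0∞}

def scaledDerivENorm (μ : Measure E) (p : ℝ≥0∞) (s : ℝ) (j : ℕ) (w : E → F) : ℝ≥0∞ :=
  ENNReal.ofReal (s ^ ((j : ℝ) / 2)) * eLpNorm (fun x => ‖iteratedFDeriv ℝ j w x‖) p μ

def eAnorm (μ : Measure E) (m : ℕ) (s : ℝ) (w : E → F) : ℝ≥0∞ :=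
  ∑ j ∈ Finset.range (m + 1), (scaledDerivENorm μ ⊤ s j w + scaledDerivENorm μ 2 s (j + 1) w)

def scaledLeibnizTerm (μ : Measure E) (p : ℝ≥0∞) (s : ℝ) (k i : ℕ) (f g : E → A) : ℝ≥0∞ :=
  ENNReal.ofReal (s ^ ((k : ℝ) / 2)) *
    eLpNorm (fun x => ‖iteratedFDeriv ℝ i f x‖ * ‖iteratedFDeriv ℝ (k - i) g x‖) p μ

lemma scaledDerivENorm_top_le_eAnorm {m i : ℕ} (hi : i ≤ m) (w : E → F) :
    scaledDerivENorm μ ⊤ s i w ≤ eAnorm μ m s w :=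
  le_self_add.trans <| Finset.single_le_sum
    (f := fun j => scaledDerivENorm μ ⊤ s j w + scaledDerivENorm μ 2 s (j + 1) w)
    (fun _ _ => zero_le) (Finset.mem_range_succ_iff.2 hi)

lemma scaledDerivENorm_two_le_eAnorm {m i : ℕ} (hi : i ≤ m) (w : E → F) :
    scaledDerivENorm μ 2 s (i + 1) w ≤ eAnorm μ m s w :=
  le_add_self.trans <| Finset.single_le_sum
    (f := fun j => scaledDerivENorm μ ⊤ s j w + scaledDerivENorm μ 2 s (j + 1) w)
    (fun _ _ => zero_le) (Finset.mem_range_succ_iff.2 hi)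

variable [OpensMeasurableSpace E]

lemma eLpNorm_norm_iteratedFDeriv_mul_le {f g : E → A} {k : ℕ} (hf : ContDiff ℝ k f)
    (hg : ContDiff ℝ k g) (hp : 1 ≤ p) :
    eLpNorm (fun x => ‖iteratedFDeriv ℝ k (fun y => f y * g y) x‖) p μ ≤
      ∑ i ∈ Finset.range (k + 1), (k.choose i : ℝ≥0∞) *
        eLpNorm (fun x => ‖iteratedFDeriv ℝ i f x‖ * ‖iteratedFDeriv ℝ (k - i) g x‖) p μ := by
  have hmeas : ∀ i ∈ Finset.range (k + 1), AEStronglyMeasurable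
      (fun x => (k.choose i : ℝ) • (‖iteratedFDeriv ℝ i f x‖ * ‖iteratedFDeriv ℝ (k - i) g x‖))
      μ := by
    intro i hi
    have := continuous_norm_iteratedFDeriv hf (by exact_mod_cast Finset.mem_range_succ_iff.1 hi)
    have := continuous_norm_iteratedFDeriv hg (by exact_mod_cast Nat.sub_le k i)
    exact Continuous.aestronglyMeasurable (by fun_prop)
  calc eLpNorm (fun x => ‖iteratedFDeriv ℝ k (fun y => f y * g y) x‖) p μ
      ≤ eLpNorm (∑ i ∈ Finset.range (k + 1), fun x => (k.choose i : ℝ) •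
          (‖iteratedFDeriv ℝ i f x‖ * ‖iteratedFDeriv ℝ (k - i) g x‖)) p μ := by
        refine eLpNorm_mono_real fun x => ?_
        simpa [norm_norm, mul_assoc] using norm_iteratedFDeriv_mul_le hf hg x le_rfl
    _ ≤ ∑ i ∈ Finset.range (k + 1), eLpNorm (fun x => (k.choose i : ℝ) •
          (‖iteratedFDeriv ℝ i f x‖ * ‖iteratedFDeriv ℝ (k - i) g x‖)) p μ :=
        eLpNorm_sum_le hmeas hp
    _ = _ := by
        refine Finset.sum_congr rfl fun i _ => ?_
        refine (eLpNorm_const_smul (k.choose i : ℝ)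
          (fun x => ‖iteratedFDeriv ℝ i f x‖ * ‖iteratedFDeriv ℝ (k - i) g x‖) p μ).trans ?_
        simp

lemma scaledDerivENorm_mul_le {f g : E → A} {k : ℕ} (hf : ContDiff ℝ k f) (hg : ContDiff ℝ k g)
    (hp : 1 ≤ p) {B : ℝ≥0∞} (hB : ∀ i ≤ k, scaledLeibnizTerm μ p s k i f g ≤ B) :
    scaledDerivENorm μ p s k (fun x => f x * g x) ≤ 2 ^ k * B := by
  calc scaledDerivENorm μ p s k (fun x => f x * g x)
      ≤ ENNReal.ofReal (s ^ ((k : ℝ) / 2)) * ∑ i ∈ Finset.range (k + 1), (k.choose i : ℝ≥0∞) *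
          eLpNorm (fun x => ‖iteratedFDeriv ℝ i f x‖ * ‖iteratedFDeriv ℝ (k - i) g x‖) p μ :=
        mul_le_mul_right (eLpNorm_norm_iteratedFDeriv_mul_le hf hg hp) _
    _ = ∑ i ∈ Finset.range (k + 1), (k.choose i : ℝ≥0∞) * scaledLeibnizTerm μ p s k i f g := by
        rw [Finset.mul_sum]
        exact Finset.sum_congr rfl fun i _ => mul_left_comm _ _ _
    _ ≤ ∑ i ∈ Finset.range (k + 1), (k.choose i : ℝ≥0∞) * B := by
        gcongr with i hi
        exact hB i (Finset.mem_range_succ_iff.1 hi)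
    _ = 2 ^ k * B := by
        rw [← Finset.sum_mul, ← Nat.cast_sum, Nat.sum_range_choose]
        norm_cast

lemma scaledLeibnizTerm_le_top_mul (hs : 0 ≤ s) {f g : E → A} {k i : ℕ} (hik : i ≤ k)
    (hg : ContDiff ℝ k g) :
    scaledLeibnizTerm μ p s k i f g ≤
      scaledDerivENorm μ ⊤ s i f * scaledDerivENorm μ p s (k - i) g := by
  have hHolder := eLpNorm_smul_le_eLpNorm_top_mul_eLpNorm p
    (continuous_norm_iteratedFDeriv hg (by exact_mod_cast Nat.sub_le k i)).aestronglyMeasurable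
    (fun x => ‖iteratedFDeriv ℝ i f x‖) (μ := μ)
  rw [scaledLeibnizTerm, ofReal_rpow_half_eq_mul hs hik, scaledDerivENorm, scaledDerivENorm,
    mul_mul_mul_comm, eLpNorm_exponent_top]
  gcongr
  exact hHolder

lemma scaledLeibnizTerm_le_mul_top (hs : 0 ≤ s) {f g : E → A} {k i : ℕ} (hik : i ≤ k)
    (hf : ContDiff ℝ k f) :
    scaledLeibnizTerm μ p s k i f g ≤
      scaledDerivENorm μ p s i f * scaledDerivENorm μ ⊤ s (k - i) g := by
  have hHolder := eLpNorm_smul_le_eLpNorm_mul_eLpNorm_top p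
    (fun x => ‖iteratedFDeriv ℝ (k - i) g x‖)
    (continuous_norm_iteratedFDeriv hf (by exact_mod_cast hik)).aestronglyMeasurable (μ := μ)
  rw [scaledLeibnizTerm, ofReal_rpow_half_eq_mul hs hik, scaledDerivENorm, scaledDerivENorm,
    mul_mul_mul_comm, eLpNorm_exponent_top]
  gcongr
  exact hHolder

lemma scaledDerivENorm_top_mul_le (hs : 0 ≤ s) {f g : E → A} {m j : ℕ} (hj : j ≤ m)
    (hf : ContDiff ℝ j f) (hg : ContDiff ℝ j g) :
    scaledDerivENorm μ ⊤ s j (fun x => f x * g x) ≤ 2 ^ j * (eAnorm μ m s f * eAnorm μ m s g) :=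
  scaledDerivENorm_mul_le hf hg le_top fun i hi =>
    (scaledLeibnizTerm_le_top_mul hs hi hg).trans <| mul_le_mul'
      (scaledDerivENorm_top_le_eAnorm (hi.trans hj) f)
      (scaledDerivENorm_top_le_eAnorm ((Nat.sub_le j i).trans hj) g)

lemma scaledDerivENorm_two_mul_le (hs : 0 ≤ s) {f g : E → A} {m j : ℕ} (hj : j ≤ m)
    (hf : ContDiff ℝ (j + 1) f) (hg : ContDiff ℝ (j + 1) g) :
    scaledDerivENorm μ 2 s (j + 1) (fun x => f x * g x) ≤
      2 ^ (j + 1) * (eAnorm μ m s f * eAnorm μ m s g) := by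
  refine scaledDerivENorm_mul_le hf hg one_le_two fun i hi => ?_
  rcases hi.lt_or_eq with hi | rfl
  · have hij : i ≤ j := Nat.lt_succ_iff.1 hi
    refine (scaledLeibnizTerm_le_top_mul hs hi.le hg).trans <| mul_le_mul'
      (scaledDerivENorm_top_le_eAnorm (hij.trans hj) f) ?_
    rw [Nat.sub_add_comm hij]
    exact scaledDerivENorm_two_le_eAnorm ((Nat.sub_le j i).trans hj) g
  · refine (scaledLeibnizTerm_le_mul_top hs le_rfl hf).trans <| mul_le_mul'
      (scaledDerivENorm_two_le_eAnorm hj f) ?_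
    rw [Nat.sub_self]
    exact scaledDerivENorm_top_le_eAnorm (Nat.zero_le m) g

lemma eAnorm_mul_le (hs : 0 ≤ s) {f g : E → A} {m : ℕ} (hf : ContDiff ℝ (m + 1) f)
    (hg : ContDiff ℝ (m + 1) g) :
    eAnorm μ m s (fun x => f x * g x) ≤
      ((m + 1) * 2 ^ (m + 2) : ℕ) * (eAnorm μ m s f * eAnorm μ m s g) := by
  set P := eAnorm μ m s f * eAnorm μ m s g
  calc eAnorm μ m s (fun x => f x * g x)
      ≤ ∑ _j ∈ Finset.range (m + 1), 2 ^ (m + 2) * P := by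
        refine Finset.sum_le_sum fun j hj => ?_
        have hjm := Finset.mem_range_succ_iff.1 hj
        have hj0 : (j : WithTop ℕ∞) ≤ (m + 1 : ℕ) := mod_cast hjm.trans m.le_succ
        have hj1 : ((j + 1 : ℕ) : WithTop ℕ∞) ≤ (m + 1 : ℕ) := mod_cast Nat.succ_le_succ hjm
        calc _ ≤ 2 ^ j * P + 2 ^ (j + 1) * P := add_le_add
              (scaledDerivENorm_top_mul_le hs hjm (hf.of_le hj0) (hg.of_le hj0))
              (scaledDerivENorm_two_mul_le hs hjm (hf.of_le hj1) (hg.of_le hj1))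
          _ ≤ 2 ^ (m + 1) * P + 2 ^ (m + 1) * P := by gcongr <;> first | omega | norm_num
          _ = 2 ^ (m + 2) * P := by ring
    _ = ((m + 1) * 2 ^ (m + 2) : ℕ) * P := by
        rw [Finset.sum_const, Finset.card_range, nsmul_eq_mul, ← mul_assoc]
        norm_cast

end ScaledNorms

namespace SchwartzMap

variable {D V : Type*} [NormedAddCommGroup D] [NormedSpace ℝ D] [MeasurableSpace D]
  [NormedAddCommGroup V] [NormedSpace ℝ V]

lemma eLpNorm_norm_iteratedFDeriv_top_lt_top (u : 𝓢(D, V)) (n : ℕ) (μ : Measure D) :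
    eLpNorm (fun x => ‖iteratedFDeriv ℝ n u x‖) ⊤ μ < ⊤ := by
  rw [eLpNorm_exponent_top]
  refine eLpNormEssSup_lt_top_of_ae_bound (C := SchwartzMap.seminorm ℝ 0 n u) (ae_of_all _ ?_)
  simpa using u.norm_iteratedFDeriv_le_seminorm ℝ n

variable [BorelSpace D] [SecondCountableTopology D]

lemma eLpNorm_norm_iteratedFDeriv_two_lt_top (u : 𝓢(D, V)) (n : ℕ) (μ : Measure D)
    [μ.HasTemperateGrowth] : eLpNorm (fun x => ‖iteratedFDeriv ℝ n u x‖) 2 μ < ⊤ := by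
  have hmeas : AEStronglyMeasurable (fun x => ‖iteratedFDeriv ℝ n u x‖) μ :=
    (continuous_norm_iteratedFDeriv (u.smooth ⊤) (by exact_mod_cast le_top)).aestronglyMeasurable
  have hint : Integrable (fun x => ‖iteratedFDeriv ℝ n u x‖) μ := by
    simpa using u.integrable_pow_mul_iteratedFDeriv μ 0 n
  have hsq : Integrable (fun x => ‖iteratedFDeriv ℝ n u x‖ * ‖iteratedFDeriv ℝ n u x‖) μ :=
    hint.bdd_mul (c := SchwartzMap.seminorm ℝ 0 n u) hmeas
      (ae_of_all _ fun x => by simpa using u.norm_iteratedFDeriv_le_seminorm ℝ n x)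
  exact ((memLp_two_iff_integrable_sq hmeas).2 (by simpa [sq] using hsq)).eLpNorm_lt_top

lemma eAnorm_lt_top (u : 𝓢(D, V)) (m : ℕ) (s : ℝ) (μ : Measure D) [μ.HasTemperateGrowth] :
    eAnorm μ m s u < ⊤ :=
  ENNReal.sum_lt_top.2 fun j _ => ENNReal.add_lt_top.2
    ⟨ENNReal.mul_lt_top ENNReal.ofReal_lt_top (u.eLpNorm_norm_iteratedFDeriv_top_lt_top j μ),
      ENNReal.mul_lt_top ENNReal.ofReal_lt_top (u.eLpNorm_norm_iteratedFDeriv_two_lt_top _ μ)⟩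

end SchwartzMap

lemma Anorm_eq_toReal_eAnorm {m : ℕ} {s : ℝ} (hs : 0 ≤ s) {w : EuclideanSpace ℝ (Fin 2) → ℂ}
    (hw : eAnorm volume m s w ≠ ⊤) : Anorm m s w = (eAnorm volume m s w).toReal := by
  rw [eAnorm, ENNReal.toReal_sum fun j hj => ENNReal.sum_ne_top.1 hw j hj]
  refine Finset.sum_congr rfl fun j hj => ?_
  obtain ⟨hT, hS⟩ := ENNReal.add_ne_top.1 (ENNReal.sum_ne_top.1 hw j hj)
  rw [ENNReal.toReal_add hT hS, scaledDerivENorm, scaledDerivENorm, ENNReal.toReal_mul,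
    ENNReal.toReal_mul, ENNReal.toReal_ofReal (Real.rpow_nonneg hs _),
    ENNReal.toReal_ofReal (Real.rpow_nonneg hs _), Nat.cast_succ]

/-- **Algebra property of the `A^m(s)` norms:** for every `m` there is `C_m` with
`‖uv‖_{A^m(s)} ≤ C_m ‖u‖_{A^m(s)} ‖v‖_{A^m(s)}` for all Schwartz `u, v` and all `s > 0`. -/
theorem stmt5 (m : ℕ) :
    ∃ C > 0, ∀ s : ℝ, 0 < s →
      ∀ u v : SchwartzMap (EuclideanSpace ℝ (Fin 2)) ℂ,
        Anorm m s (fun x => u x * v x) ≤ C * Anorm m s (⇑u) * Anorm m s (⇑v) := by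
  refine ⟨((m + 1) * 2 ^ (m + 2) : ℕ), by positivity, fun s hs u v => ?_⟩
  have hmul := eAnorm_mul_le (μ := volume) (m := m) hs.le
    ((u.smooth ⊤).of_le (mod_cast le_top)) ((v.smooth ⊤).of_le (mod_cast le_top))
  have hbound : ((m + 1) * 2 ^ (m + 2) : ℕ) * (eAnorm volume m s u * eAnorm volume m s v) ≠ ⊤ :=
    ENNReal.mul_ne_top (ENNReal.natCast_ne_top _)
      (ENNReal.mul_ne_top (u.eAnorm_lt_top m s volume).ne (v.eAnorm_lt_top m s volume).ne)
  rw [Anorm_eq_toReal_eAnorm hs.le (ne_top_of_le_ne_top hbound hmul),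
    Anorm_eq_toReal_eAnorm hs.le (u.eAnorm_lt_top m s volume).ne,
    Anorm_eq_toReal_eAnorm hs.le (v.eAnorm_lt_top m s volume).ne, mul_assoc]
  simpa only [ENNReal.toReal_mul, ENNReal.toReal_natCast] using ENNReal.toReal_mono hbound hmul

end
end

section
/- Besicovitch-type covering lemma: Let (Y,ν) be a measure space with ν(Y) ≤ A, let I be an interval, let M ≥ 1 be an integer, and for each y ∈ Y let 𝒥_y be a measurable family of at most M intervals partitioning I. Then there exists a partition 𝒥 of I into at most M intervals such that for each J ∈ 𝒥, ∫_Y #{K ∈ 𝒥_y : J ∩ K ≠ ∅} dν(y) ≤ 3A. -/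
/-!
Let `W a b` be the `ν`-integral of the number of pieces of `𝒥_y` lying strictly above `a` and
reaching below `b`. The cell `I ∩ [a, b)` meets only these pieces and the one containing `a`, so
its integrated count is at most `W a b + ν(Y)`. Cut greedily: `c₀ = -∞` and `c_{k+1}` is the
largest `e` with `W c_k e ≤ 2A`, a bound that survives the supremum by monotone convergence.
As `e ↓ c_k` at most one piece per `y` is still counted, so `W c_k e` falls below `2A` and the
cuts increase strictly; maximality then gives `W c_k c_{k+2} > 2A`. As `W` is superadditive
and `W (-∞) (+∞) ≤ M ν(Y) ≤ M A`, the cut `c_M` is already `+∞`.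

The delicate point is the measurability of the integrand: if a piece has no rational point
at or below its point `x`, then `x = inf I` or `x` is the supremum of the rational points of
another piece, and these are countably many measurable candidates.
-/

open MeasureTheory Set Filter Topology Function Finset
open scoped ENNReal Classical

section Greedy

variable {α : Type*} [CompleteLinearOrder α] {W : α → α → ℝ≥0∞} {B : ℝ≥0∞}

variable (W B) in
noncomputable def greedyCuts : ℕ → α
  | 0 => ⊥
  | k + 1 => sSup {e | W (greedyCuts k) e ≤ B}

@[simp]
lemma greedyCuts_zero : greedyCuts W B 0 = ⊥ := rfl

lemma lt_of_greedyCuts_succ_lt {k : ℕ} {e : α} (he : greedyCuts W B (k + 1) < e) :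
    B < W (greedyCuts W B k) e := by
  by_contra! h
  exact he.not_ge (le_sSup h)

lemma monotone_greedyCuts (hW_self : ∀ a, W a a ≤ B) : Monotone (greedyCuts W B) :=
  monotone_nat_of_le_succ fun _ => le_sSup (hW_self _)

lemma greedyCuts_cost_le (hW_mono : ∀ a, Monotone (W a))
    (hW_sup : ∀ a b, (∀ e < b, W a e ≤ B) → W a b ≤ B) (k : ℕ) :
    W (greedyCuts W B k) (greedyCuts W B (k + 1)) ≤ B := by
  refine hW_sup _ _ fun e he => ?_
  obtain ⟨e', he', hee'⟩ := lt_sSup_iff.1 he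
  exact (hW_mono _ hee'.le).trans he'

lemma greedyCuts_lt_succ (hW_gt : ∀ a < ⊤, ∃ e > a, W a e ≤ B) {k : ℕ}
    (hk : greedyCuts W B k < ⊤) : greedyCuts W B k < greedyCuts W B (k + 1) := by
  obtain ⟨e, hke, he⟩ := hW_gt _ hk
  exact hke.trans_le (le_sSup he)

lemma mul_lt_greedyCuts_cost (hW_self : ∀ a, W a a ≤ B)
    (hW_add : ∀ a b c, a ≤ b → b ≤ c → W a b + W b c ≤ W a c)
    (hW_gt : ∀ a < ⊤, ∃ e > a, W a e ≤ B) (n : ℕ)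
    (hn : greedyCuts W B (2 * n + 1) < ⊤) : (n + 1) * B < W ⊥ (greedyCuts W B (2 * n + 2)) := by
  have hpair : ∀ k, greedyCuts W B (k + 1) < ⊤ →
      B < W (greedyCuts W B k) (greedyCuts W B (k + 2)) :=
    fun k hk => lt_of_greedyCuts_succ_lt (greedyCuts_lt_succ hW_gt hk)
  induction n with
  | zero => simpa using hpair 0 hn
  | succ n ih =>
    have hmono := monotone_greedyCuts hW_self
    calc ((n + 1 : ℕ) + 1) * B = (n + 1) * B + B := by push_cast; ring
      _ < W ⊥ (greedyCuts W B (2 * n + 2)) +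
          W (greedyCuts W B (2 * n + 2)) (greedyCuts W B (2 * n + 4)) :=
        ENNReal.add_lt_add (ih ((hmono (by omega)).trans_lt hn)) (hpair _ hn)
      _ ≤ W ⊥ (greedyCuts W B (2 * (n + 1) + 2)) := hW_add _ _ _ bot_le (hmono (by omega))

lemma greedyCuts_eq_top (hW_self : ∀ a, W a a ≤ B) (hW_mono : ∀ a, Monotone (W a))
    (hW_add : ∀ a b c, a ≤ b → b ≤ c → W a b + W b c ≤ W a c)
    (hW_gt : ∀ a < ⊤, ∃ e > a, W a e ≤ B) {n : ℕ} (htotal : W ⊥ ⊤ ≤ (n + 1) * B) :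
    greedyCuts W B (2 * n + 1) = ⊤ := by
  by_contra h
  exact (mul_lt_greedyCuts_cost hW_self hW_add hW_gt n (lt_top_iff_ne_top.2 h)).not_ge
    ((hW_mono ⊥ le_top).trans htotal)

end Greedy

section Pieces

variable {ι : Type*} [Fintype ι] (P : ι → Set ℝ)

/-- The pieces whose left end lies in `[a, b)`, the piece containing `a` excluded. -/
noncomputable def piecesStartingIn (a b : EReal) : Finset ι :=
  univ.filter fun i => (∀ x ∈ P i, a < x) ∧ ∃ x ∈ P i, (x : EReal) < b

variable {P}

lemma mem_piecesStartingIn {a b : EReal} {i : ι} :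
    i ∈ piecesStartingIn P a b ↔ (∀ x ∈ P i, a < x) ∧ ∃ x ∈ P i, (x : EReal) < b := by
  simp [piecesStartingIn]

lemma piecesStartingIn_self (a : EReal) : piecesStartingIn P a a = ∅ :=
  filter_false_of_mem fun _ _ ⟨hgt, x, hx, hlt⟩ => (hgt x hx).not_gt hlt

lemma piecesStartingIn_mono {a b b' : EReal} (h : b ≤ b') :
    piecesStartingIn P a b ⊆ piecesStartingIn P a b' :=
  fun i hi => by
    obtain ⟨hgt, x, hx, hlt⟩ := mem_piecesStartingIn.1 hi
    exact mem_piecesStartingIn.2 ⟨hgt, x, hx, hlt.trans_le h⟩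

lemma card_piecesStartingIn_add_le {a b c : EReal} (hab : a ≤ b) (hbc : b ≤ c) :
    #(piecesStartingIn P a b) + #(piecesStartingIn P b c) ≤ #(piecesStartingIn P a c) := by
  rw [← card_union_of_disjoint]
  · refine card_le_card (union_subset (piecesStartingIn_mono hbc) fun i hi => ?_)
    obtain ⟨hgt, hlt⟩ := mem_piecesStartingIn.1 hi
    exact mem_piecesStartingIn.2 ⟨fun x hx => hab.trans_lt (hgt x hx), hlt⟩
  · refine disjoint_filter.2 fun i _ ⟨_, x, hx, hlt⟩ ⟨hgt, _⟩ => (hgt x hx).not_gt hlt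

lemma card_filter_inter_nonempty_le (hdisj : Pairwise (Disjoint on P))
    (hconn : ∀ i, (P i).OrdConnected)
    {J : Set ℝ} {a b : EReal} (hJ : ∀ x ∈ J, a ≤ x ∧ (x : EReal) < b) :
    #(univ.filter fun i => (J ∩ P i).Nonempty) ≤ #(piecesStartingIn P a b) + 1 := by
  let straddling := univ.filter fun i => ∃ r : ℝ, (r : EReal) = a ∧ r ∈ P i
  have hstraddling : #straddling ≤ 1 := card_le_one.2 fun i hi j hj => by
    obtain ⟨r, hr, hri⟩ := (mem_filter.1 hi).2
    obtain ⟨s, hs, hsj⟩ := (mem_filter.1 hj).2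
    obtain rfl : r = s := EReal.coe_injective (hr.trans hs.symm)
    by_contra hij
    exact disjoint_left.1 (hdisj hij) hri hsj
  refine (card_le_card fun i hi => ?_).trans ((Finset.card_union_le _ _).trans (by gcongr))
  obtain ⟨z, hzJ, hzi⟩ := (mem_filter.1 hi).2
  obtain ⟨haz, hzb⟩ := hJ z hzJ
  by_cases habove : ∀ x ∈ P i, a < x
  · exact mem_union_left _ (mem_piecesStartingIn.2 ⟨habove, z, hzi, hzb⟩)
  push Not at habove
  obtain ⟨x, hxi, hxa⟩ := habove
  lift a to ℝ using
    ⟨(haz.trans_lt (EReal.coe_lt_top z)).ne, (hxa.trans_lt' (EReal.bot_lt_coe x)).ne'⟩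
  exact mem_union_right _ (mem_filter.2 ⟨mem_univ i, a, rfl,
    (hconn i).out hxi hzi ⟨EReal.coe_le_coe_iff.1 hxa, EReal.coe_le_coe_iff.1 haz⟩⟩)

lemma exists_card_piecesStartingIn_le_one (hdisj : Pairwise (Disjoint on P))
    (hconn : ∀ i, (P i).OrdConnected) {a : EReal} (ha : a < ⊤) :
    ∃ e > a, #(piecesStartingIn P a e) ≤ 1 := by
  rcases (piecesStartingIn P a ⊤).eq_empty_or_nonempty with hempty | hne
  · exact ⟨⊤, ha, by simp [hempty]⟩
  let p : ι → ℝ := fun i => Classical.epsilon (· ∈ P i)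
  have hp : ∀ i ∈ piecesStartingIn P a ⊤, p i ∈ P i := fun i hi => by
    obtain ⟨x, hx, -⟩ := (mem_piecesStartingIn.1 hi).2
    exact Classical.epsilon_spec ⟨x, hx⟩
  -- the piece with the leftmost chosen point blocks every other piece from starting below it
  obtain ⟨i₀, hi₀, hmin⟩ := exists_min_image _ p hne
  refine ⟨p i₀, (mem_piecesStartingIn.1 hi₀).1 _ (hp i₀ hi₀),
    card_le_one.2 fun i hi j hj => ?_⟩
  have hblock : ∀ k ∈ piecesStartingIn P a (p i₀), k = i₀ := fun k hk => by
    have hk' := piecesStartingIn_mono le_top hk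
    obtain ⟨-, z, hz, hzp⟩ := mem_piecesStartingIn.1 hk
    by_contra hki
    exact disjoint_left.1 (hdisj hki)
      ((hconn k).out hz (hp k hk') ⟨(EReal.coe_lt_coe_iff.1 hzp).le, hmin k hk'⟩) (hp i₀ hi₀)
  rw [hblock i hi, hblock j hj]

lemma eventually_piecesStartingIn_eq {a b : EReal} {e : ℕ → EReal}
    (he : Tendsto e atTop (𝓝 b)) (hle : ∀ n, e n ≤ b) :
    ∀ᶠ n in atTop, piecesStartingIn P a (e n) = piecesStartingIn P a b := by
  have : ∀ i ∈ piecesStartingIn P a b, ∀ᶠ n in atTop, i ∈ piecesStartingIn P a (e n) :=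
    fun i hi => by
      obtain ⟨hgt, x, hx, hlt⟩ := mem_piecesStartingIn.1 hi
      filter_upwards [he.eventually (lt_mem_nhds hlt)] with n hn
      exact mem_piecesStartingIn.2 ⟨hgt, x, hx, hn⟩
  filter_upwards [(Finset.eventually_all _).2 this] with n hn
  exact (piecesStartingIn_mono (hle n)).antisymm hn

end Pieces

section RatSup

/-- Unlike `sSup`, a countable supremum, hence measurable in a measurably varying `S`. -/
noncomputable def ratSup (S : Set ℝ) : EReal :=
  ⨆ q : ℚ, if (q : ℝ) ∈ S then ((q : ℝ) : EReal) else ⊥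

lemma le_ratSup {S : Set ℝ} {q : ℚ} (hq : (q : ℝ) ∈ S) : ((q : ℝ) : EReal) ≤ ratSup S :=
  le_iSup_of_le q (by rw [if_pos hq])

lemma ratSup_le {S : Set ℝ} {c : EReal} (h : ∀ x ∈ S, (x : EReal) ≤ c) : ratSup S ≤ c :=
  iSup_le fun q => by split_ifs with hq; exacts [h _ hq, bot_le]

variable {ι : Type*} [Fintype ι] {P : ι → Set ℝ} {I : Set ℝ}

lemma exists_ratSup_eq (hcover : ⋃ j, P j = I) (hdisj : Pairwise (Disjoint on P))
    (hconn : ∀ j, (P j).OrdConnected) (hI : I.OrdConnected) {i : ι} {x w : ℝ} (hx : x ∈ P i)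
    (hnoq : ∀ q : ℚ, (q : ℝ) ∈ P i → x < q) (hw : w ∈ I) (hwx : w < x) :
    ∃ j, ratSup (P j) = x := by
  have hxI : x ∈ I := hcover ▸ mem_iUnion_of_mem i hx
  have hleft : ∀ q : ℚ, w < q → (q : ℝ) < x →
      ∃ j, (q : ℝ) ∈ P j ∧ ratSup (P j) ≤ x := by
    intro q hwq hqx
    obtain ⟨j, hj⟩ := mem_iUnion.1 (hcover.symm ▸ hI.out hw hxI ⟨hwq.le, hqx.le⟩ :
      (q : ℝ) ∈ ⋃ j, P j)
    have hji : j ≠ i := by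
      rintro rfl
      exact (hnoq q hj).not_gt hqx
    refine ⟨j, hj, ratSup_le fun z hz => ?_⟩
    by_contra! hzx
    exact disjoint_left.1 (hdisj hji)
      ((hconn j).out hj hz ⟨hqx.le, (EReal.coe_lt_coe_iff.1 hzx).le⟩) hx
  -- otherwise the finitely many rational suprema below `x` leave a gap below `x`
  by_contra! hne
  let m := (univ.filter fun j => ratSup (P j) < x).sup fun j => ratSup (P j)
  have hm : m < x := (Finset.sup_lt_iff (EReal.bot_lt_coe x)).2 fun j hj => (mem_filter.1 hj).2
  obtain ⟨q, hq, hqx⟩ := EReal.lt_iff_exists_rat_btwn.1 (max_lt (EReal.coe_lt_coe hwx) hm)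
  obtain ⟨j, hqj, hjx⟩ := hleft q (EReal.coe_lt_coe_iff.1 ((le_max_left _ _).trans_lt hq))
    (EReal.coe_lt_coe_iff.1 hqx)
  have hjm : ratSup (P j) ≤ m :=
    le_sup (f := fun j => ratSup (P j)) (mem_filter.2 ⟨mem_univ j, hjx.lt_of_ne (hne j)⟩)
  exact ((le_max_right _ _).trans_lt hq).not_ge ((le_ratSup hqj).trans hjm)

lemma exists_rat_le_or_ratSup_eq_or_isLeast (hcover : ⋃ j, P j = I)
    (hdisj : Pairwise (Disjoint on P)) (hconn : ∀ j, (P j).OrdConnected) (hI : I.OrdConnected)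
    {i : ι} {x : ℝ} (hx : x ∈ P i) :
    (∃ q : ℚ, (q : ℝ) ∈ P i ∧ (q : ℝ) ≤ x) ∨ (∃ j, ratSup (P j) = x) ∨
      IsLeast I x := by
  by_cases hq : ∃ q : ℚ, (q : ℝ) ∈ P i ∧ (q : ℝ) ≤ x
  · exact .inl hq
  push Not at hq
  by_cases hleast : IsLeast I x
  · exact .inr (.inr hleast)
  have hxI : x ∈ I := hcover ▸ mem_iUnion_of_mem i hx
  obtain ⟨w, hw, hwx⟩ : ∃ w ∈ I, w < x := by
    simpa [IsLeast, lowerBounds, hxI] using hleast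
  exact .inr (.inl (exists_ratSup_eq hcover hdisj hconn hI hx hq hw hwx))

end RatSup

section Measurability

variable {Y ι : Type*} [MeasurableSpace Y] {T : Y → ι → Set ℝ} {I : Set ℝ}

lemma measurableSet_apply_mem (hTmeas : ∀ i, MeasurableSet {p : Y × ℝ | p.2 ∈ T p.1 i})
    {g : Y → ℝ} (hg : Measurable g) (i : ι) : MeasurableSet {y | g y ∈ T y i} :=
  measurable_id.prodMk hg (hTmeas i)

lemma measurable_ratSup (hTmeas : ∀ i, MeasurableSet {p : Y × ℝ | p.2 ∈ T p.1 i}) (i : ι) :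
    Measurable fun y => ratSup (T y i) :=
  .iSup fun _ => .ite (measurableSet_apply_mem hTmeas measurable_const i) measurable_const
    measurable_const

variable [Fintype ι] (hTmeas : ∀ i, MeasurableSet {p : Y × ℝ | p.2 ∈ T p.1 i})
  (hTcover : ∀ y, ⋃ i, T y i = I) (hTdisj : ∀ y, Pairwise (Disjoint on T y))
  (hTint : ∀ y i, (T y i).OrdConnected) (hI : I.OrdConnected)

include hTmeas hTcover hTdisj hTint hI

/- A projection of a measurable set need not be measurable; the partition structure provides
countably many measurable candidate witnesses instead. -/
lemma measurableSet_exists_mem_lt (i : ι) (b : ℝ) :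
    MeasurableSet {y | ∃ x ∈ T y i, x < b} := by
  have hcands : {y | ∃ x ∈ T y i, x < b} =
      (⋃ q : ℚ, {y | (q : ℝ) ∈ T y i ∧ (q : ℝ) < b}) ∪
        ((⋃ j, {y | (ratSup (T y j)).toReal ∈ T y i ∧ (ratSup (T y j)).toReal < b}) ∪
          {y | sInf I ∈ T y i ∧ sInf I < b}) := by
    ext y
    simp only [mem_ofPred_eq, mem_union, mem_iUnion]
    constructor
    · rintro ⟨x, hx, hxb⟩
      rcases exists_rat_le_or_ratSup_eq_or_isLeast (hTcover y) (hTdisj y) (hTint y) hI hx with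
        ⟨q, hq, hqx⟩ | ⟨j, hj⟩ | hleast
      · exact .inl ⟨q, hq, hqx.trans_lt hxb⟩
      · exact .inr (.inl ⟨j, by simpa [hj] using ⟨hx, hxb⟩⟩)
      · exact .inr (.inr (hleast.csInf_eq ▸ ⟨hx, hxb⟩))
    · rintro (⟨q, h⟩ | ⟨j, h⟩ | h) <;> exact ⟨_, h⟩
  have hmem : ∀ g : Y → ℝ, Measurable g → MeasurableSet {y | g y ∈ T y i ∧ g y < b} :=
    fun g hg => (measurableSet_apply_mem hTmeas hg i).inter (hg measurableSet_Iio)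
  rw [hcands]
  exact .union (.iUnion fun q => hmem _ measurable_const)
    (.union (.iUnion fun j => hmem _ (measurable_ratSup hTmeas j).ereal_toReal)
      (hmem _ measurable_const))

lemma measurableSet_exists_mem_coe_lt (i : ι) (b : EReal) :
    MeasurableSet {y | ∃ x ∈ T y i, (x : EReal) < b} := by
  have hrat : {y | ∃ x ∈ T y i, (x : EReal) < b} =
      ⋃ (q : ℚ) (_ : ((q : ℝ) : EReal) < b), {y | ∃ x ∈ T y i, x < q} := by
    ext y
    simp only [mem_ofPred_eq, mem_iUnion, exists_prop]
    constructor
    · rintro ⟨x, hx, hxb⟩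
      obtain ⟨q, hxq, hqb⟩ := EReal.lt_iff_exists_rat_btwn.1 hxb
      exact ⟨q, hqb, x, hx, EReal.coe_lt_coe_iff.1 hxq⟩
    · rintro ⟨q, hqb, x, hx, hxq⟩
      exact ⟨x, hx, (EReal.coe_lt_coe hxq).trans hqb⟩
  rw [hrat]
  exact .iUnion fun q => .iUnion fun _ =>
    measurableSet_exists_mem_lt hTmeas hTcover hTdisj hTint hI i q

lemma measurableSet_forall_mem_lt_coe (i : ι) (a : EReal) :
    MeasurableSet {y | ∀ x ∈ T y i, a < (x : EReal)} := by
  have hcompl : {y | ∀ x ∈ T y i, a < (x : EReal)} =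
      ({y | ∃ x ∈ T y i, (x : EReal) < a} ∪
        {y | a.toReal ∈ T y i ∧ (a.toReal : EReal) = a})ᶜ := by
    ext y
    simp only [mem_compl_iff, mem_union, mem_ofPred_eq, not_or, not_exists, not_and, not_lt]
    constructor
    · intro h
      exact ⟨fun x hx => (h x hx).le, fun ha hcoe => (h _ ha).ne hcoe.symm⟩
    · rintro ⟨hle, hne⟩ x hx
      refine (hle x hx).lt_of_ne fun hax => hne ?_ ?_ <;> subst hax
      · simpa using hx
      · simp
  rw [hcompl]
  exact ((measurableSet_exists_mem_coe_lt hTmeas hTcover hTdisj hTint hI i a).union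
    ((measurableSet_apply_mem hTmeas measurable_const i).inter (.const _))).compl

lemma measurable_card_piecesStartingIn (a b : EReal) :
    Measurable fun y => (#(piecesStartingIn (T y) a b) : ℝ≥0∞) := by
  simp only [piecesStartingIn, card_filter, Nat.cast_sum, Nat.cast_ite, Nat.cast_one,
    Nat.cast_zero]
  exact Finset.measurable_sum _ fun i _ => .ite
    ((measurableSet_forall_mem_lt_coe hTmeas hTcover hTdisj hTint hI i a).inter
      (measurableSet_exists_mem_coe_lt hTmeas hTcover hTdisj hTint hI i b))
    measurable_const measurable_const

end Measurability

section StartingMass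

variable {Y ι : Type*} [MeasurableSpace Y] [Fintype ι] (ν : Measure Y) (T : Y → ι → Set ℝ)

noncomputable def startingMass (a b : EReal) : ℝ≥0∞ :=
  ∫⁻ y, #(piecesStartingIn (T y) a b) ∂ν

lemma startingMass_self (a : EReal) : startingMass ν T a a = 0 := by
  simp [startingMass, piecesStartingIn_self]

lemma startingMass_mono (a : EReal) : Monotone (startingMass ν T a) :=
  fun _ _ h => lintegral_mono fun _ => Nat.cast_le.2 (card_le_card (piecesStartingIn_mono h))

lemma startingMass_add_le {a b c : EReal} (hab : a ≤ b) (hbc : b ≤ c) :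
    startingMass ν T a b + startingMass ν T b c ≤ startingMass ν T a c :=
  (le_lintegral_add _ _).trans <| lintegral_mono fun _ => by
    rw [← Nat.cast_add]
    exact Nat.cast_le.2 (card_piecesStartingIn_add_le hab hbc)

lemma startingMass_le_card_mul (a b : EReal) :
    startingMass ν T a b ≤ Fintype.card ι * ν univ :=
  (lintegral_mono fun _ => Nat.cast_le.2 (card_le_univ _)).trans (lintegral_const _).le

variable {ν T}

lemma lintegral_card_filter_inter_nonempty_le (hTdisj : ∀ y, Pairwise (Disjoint on T y))
    (hTint : ∀ y i, (T y i).OrdConnected) {J : Set ℝ} {a b : EReal}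
    (hJ : ∀ x ∈ J, a ≤ x ∧ (x : EReal) < b) :
    ∫⁻ y, #(univ.filter fun i => (J ∩ T y i).Nonempty) ∂ν ≤
      startingMass ν T a b + ν univ :=
  calc ∫⁻ y, #(univ.filter fun i => (J ∩ T y i).Nonempty) ∂ν
      ≤ ∫⁻ y, (#(piecesStartingIn (T y) a b) + 1 : ℝ≥0∞) ∂ν :=
        lintegral_mono fun y => by
          rw [← Nat.cast_one, ← Nat.cast_add]
          exact Nat.cast_le.2 (card_filter_inter_nonempty_le (hTdisj y) (hTint y) hJ)
    _ = startingMass ν T a b + ν univ := by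
        rw [lintegral_add_right _ measurable_const, lintegral_one, startingMass]

lemma startingMass_le_of_forall_lt
    (hmeas : ∀ a b, Measurable fun y => (#(piecesStartingIn (T y) a b) : ℝ≥0∞))
    {a b : EReal} {B : ℝ≥0∞} (h : ∀ e < b, startingMass ν T a e ≤ B) :
    startingMass ν T a b ≤ B := by
  rcases eq_bot_or_bot_lt b with rfl | hb
  · exact (startingMass_mono ν T a bot_le).trans (by rw [startingMass_self]; exact zero_le)
  obtain ⟨e, he_mono, he_mem, he_lim⟩ := exists_seq_strictMono_tendsto' hb
  have hsup : startingMass ν T a b = ⨆ n, startingMass ν T a (e n) := by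
    unfold startingMass
    rw [← lintegral_iSup (fun n => hmeas a (e n))
      fun n m h y => Nat.cast_le.2 (card_le_card (piecesStartingIn_mono (he_mono.monotone h)))]
    congr 1 with y
    obtain ⟨n, hn⟩ := (eventually_piecesStartingIn_eq (P := T y) (a := a) he_lim
      fun n => (he_mem n).2.le).exists
    exact le_antisymm (hn ▸ le_iSup (fun n => (#(piecesStartingIn (T y) a (e n)) : ℝ≥0∞)) n)
      (iSup_le fun n => Nat.cast_le.2 (card_le_card (piecesStartingIn_mono (he_mem n).2.le)))
  rw [hsup]
  exact iSup_le fun n => h _ (he_mem n).2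

lemma exists_startingMass_le
    (hmeas : ∀ a b, Measurable fun y => (#(piecesStartingIn (T y) a b) : ℝ≥0∞))
    (hTdisj : ∀ y, Pairwise (Disjoint on T y)) (hTint : ∀ y i, (T y i).OrdConnected)
    {B : ℝ≥0∞} (hνB : ν univ < B) {a : EReal} (ha : a < ⊤) :
    ∃ e > a, startingMass ν T a e ≤ B := by
  obtain ⟨e, he_anti, he_mem, he_lim⟩ := exists_seq_strictAnti_tendsto' ha
  have hfin : startingMass ν T a (e 0) ≠ ⊤ :=
    ((startingMass_le_card_mul ν T _ _).trans_lt
      (ENNReal.mul_lt_top (ENNReal.natCast_lt_top _) (hνB.trans_le le_top))).ne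
  have hinf : ⨅ n, startingMass ν T a (e n) ≤ ν univ := by
    unfold startingMass
    rw [← lintegral_iInf (fun n => hmeas a (e n))
      (fun n m h y => Nat.cast_le.2 (card_le_card (piecesStartingIn_mono (he_anti.antitone h))))
      hfin, ← lintegral_one]
    refine lintegral_mono fun y => ?_
    obtain ⟨e', hae', hcard⟩ := exists_card_piecesStartingIn_le_one (hTdisj y) (hTint y) ha
    obtain ⟨n, hn⟩ := (he_lim.eventually (gt_mem_nhds hae')).exists
    exact (iInf_le _ n).trans (by
      exact_mod_cast (Finset.card_le_card (piecesStartingIn_mono hn.le)).trans hcard)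
  obtain ⟨n, hn⟩ := iInf_lt_iff.1 (hinf.trans_lt hνB)
  exact ⟨e n, (he_mem n).1, hn.le⟩

lemma exists_cuts_startingMass_le
    (hmeas : ∀ a b, Measurable fun y => (#(piecesStartingIn (T y) a b) : ℝ≥0∞))
    (hTdisj : ∀ y, Pairwise (Disjoint on T y)) (hTint : ∀ y i, (T y i).OrdConnected)
    {A : ℝ≥0∞} (hA : ν univ ≤ A) (hι : 1 ≤ Fintype.card ι) :
    ∃ c : ℕ → EReal, Monotone c ∧ c 0 = ⊥ ∧ c (Fintype.card ι) = ⊤ ∧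
      ∀ k, startingMass ν T (c k) (c (k + 1)) ≤ 2 * A := by
  have hW_self : ∀ a, startingMass ν T a a ≤ 2 * A :=
    fun a => (startingMass_self ν T a).trans_le zero_le
  have hW_gt : ∀ a < ⊤, ∃ e > a, startingMass ν T a e ≤ 2 * A := by
    rcases eq_or_ne A ⊤ with rfl | hAtop
    · exact fun a ha => ⟨⊤, ha, by simp⟩
    rcases eq_or_ne A 0 with rfl | hA0
    · have hν : ν = 0 := Measure.measure_univ_eq_zero.1 (nonpos_iff_eq_zero.1 hA)
      exact fun a ha => ⟨⊤, ha, by simp [startingMass, hν]⟩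
    exact fun a => exists_startingMass_le hmeas hTdisj hTint
      (hA.trans_lt (by simpa [two_mul] using ENNReal.lt_add_right hAtop hA0))
  let n := (Fintype.card ι - 1) / 2
  have htotal : startingMass ν T ⊥ ⊤ ≤ (n + 1) * (2 * A) := calc
    startingMass ν T ⊥ ⊤ ≤ Fintype.card ι * ν univ := startingMass_le_card_mul ν T ⊥ ⊤
    _ ≤ ((2 * (n + 1) : ℕ) : ℝ≥0∞) * A := by gcongr; omega
    _ = (n + 1) * (2 * A) := by push_cast; ring
  have hc := monotone_greedyCuts hW_self
  refine ⟨greedyCuts _ (2 * A), hc, rfl, top_le_iff.1 ?_,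
    greedyCuts_cost_le (startingMass_mono ν T) fun _ _ => startingMass_le_of_forall_lt hmeas⟩
  rw [← greedyCuts_eq_top hW_self (startingMass_mono ν T)
    (fun _ _ _ => startingMass_add_le ν T) hW_gt htotal]
  exact hc (by omega)

end StartingMass

section Cuts

variable {I : Set ℝ} {c : ℕ → EReal}

def cutPiece (I : Set ℝ) (c : ℕ → EReal) (k : ℕ) : Set ℝ :=
  I ∩ (↑) ⁻¹' Ico (c k) (c (k + 1))

lemma iUnion_cutPiece {M : ℕ} (h0 : c 0 = ⊥) (hM : c M = ⊤) :
    ⋃ k : Fin M, cutPiece I c k = I := by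
  refine (iUnion_subset fun k => inter_subset_left).antisymm fun x hx => ?_
  have hx' : (x : EReal) ∈ Ico (c 0) (c M) := ⟨h0 ▸ bot_le, hM ▸ EReal.coe_lt_top x⟩
  obtain ⟨k, hk, hxk⟩ := mem_iUnion₂.1 (Ico_subset_biUnion_Ico M c hx')
  exact mem_iUnion.2 ⟨⟨k, Finset.mem_range.1 hk⟩, hx, hxk⟩

lemma pairwise_disjoint_cutPiece {M : ℕ} (hc : Monotone c) :
    Pairwise (Disjoint on fun k : Fin M => cutPiece I c k) :=
  (hc.pairwise_disjoint_on_Ico_succ.comp_of_injective Fin.val_injective).mono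
    fun _ _ h => (h.preimage _).mono inter_subset_right inter_subset_right

lemma Set.OrdConnected.cutPiece (hI : I.OrdConnected) (k : ℕ) : (cutPiece I c k).OrdConnected :=
  hI.inter (ordConnected_Ico.preimage_mono EReal.coe_strictMono.monotone)

end Cuts

theorem stmt7_general {Y : Type*} [MeasurableSpace Y] (ν : Measure Y)
    (A : ℝ) (hY : ν Set.univ ≤ ENNReal.ofReal A)
    (I : Set ℝ) (hI : I.OrdConnected) (M : ℕ) (hM : 1 ≤ M)
    (T : Y → Fin M → Set ℝ)
    (hTmeas : ∀ i : Fin M, MeasurableSet {p : Y × ℝ | p.2 ∈ T p.1 i})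
    (hTcover : ∀ y, (⋃ i, T y i) = I)
    (hTdisj : ∀ y, Pairwise fun i i' => Disjoint (T y i) (T y i'))
    (hTint : ∀ y i, (T y i).OrdConnected) :
    ∃ J : Fin M → Set ℝ,
      (⋃ i, J i) = I ∧
      (Pairwise fun i i' => Disjoint (J i) (J i')) ∧
      (∀ i, (J i).OrdConnected) ∧
      ∀ i : Fin M,
        (∫⁻ y, ((Finset.univ.filter
            fun i' : Fin M => (J i ∩ T y i').Nonempty).card : ℝ≥0∞) ∂ν)
          ≤ ENNReal.ofReal (3 * A) := by
  obtain ⟨c, hc, hc0, hcM, hcost⟩ := exists_cuts_startingMass_le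
    (measurable_card_piecesStartingIn hTmeas hTcover hTdisj hTint hI) hTdisj hTint hY
    (by simpa using hM)
  rw [Fintype.card_fin] at hcM
  refine ⟨fun k => cutPiece I c k, iUnion_cutPiece hc0 hcM, pairwise_disjoint_cutPiece hc,
    fun k => hI.cutPiece k, fun k => ?_⟩
  calc _ ≤ startingMass ν T (c k) (c (k + 1)) + ν univ :=
        lintegral_card_filter_inter_nonempty_le hTdisj hTint fun x hx => hx.2
    _ ≤ 2 * ENNReal.ofReal A + ENNReal.ofReal A := add_le_add (hcost k) hY
    _ = ENNReal.ofReal (3 * A) := by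
        rw [ENNReal.ofReal_mul zero_le_three]; norm_num; ring

/-- **Besicovitch-type covering lemma.**
Let `(Y,ν)` be a measure space with `ν(Y) ≤ A`, `I` an interval, `M ≥ 1`, and for
each `y ∈ Y` a measurable family `T y` of at most `M` intervals partitioning `I`.
Then there is a partition `J` of `I` into at most `M` intervals such that for each
piece `J i`, `∫_Y #{K ∈ T y : J i ∩ K ≠ ∅} dν(y) ≤ 3A`. -/
theorem stmt7 {Y : Type*} [MeasurableSpace Y] (ν : Measure Y)
    (A : ℝ) (hA : 0 ≤ A) (hY : ν Set.univ ≤ ENNReal.ofReal A)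
    (I : Set ℝ) (hI : I.OrdConnected) (M : ℕ) (hM : 1 ≤ M)
    (T : Y → Fin M → Set ℝ)
    (hTmeas : ∀ i : Fin M, MeasurableSet {p : Y × ℝ | p.2 ∈ T p.1 i})
    (hTcover : ∀ y, (⋃ i, T y i) = I)
    (hTdisj : ∀ y, Pairwise fun i i' => Disjoint (T y i) (T y i'))
    (hTint : ∀ y i, (T y i).OrdConnected) :
    ∃ J : Fin M → Set ℝ,
      (⋃ i, J i) = I ∧
      (Pairwise fun i i' => Disjoint (J i) (J i')) ∧
      (∀ i, (J i).OrdConnected) ∧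
      ∀ i : Fin M,
        (∫⁻ y, ((Finset.univ.filter
            fun i' : Fin M => (J i ∩ T y i').Nonempty).card : ℝ≥0∞) ∂ν)
          ≤ ENNReal.ofReal (3 * A) :=
  stmt7_general ν A hY I hI M hM T hTmeas hTcover hTdisj hTint
end

section
/- Let (X,μ) be a measure space, 1 < p < ∞, and (Y,ν) a probability space. For each x ∈ X let E_x ⊆ Y be measurable, and let f : X × Y → ℂ be jointly measurable. Then ∫_X (1−ν(E_x))^k |∫_{E_x} f(x,y) dν(y)|^p dμ(x) ≤ ((p−1)/k)^{p−1} ∫_X ∫_Y |f(x,y)|^p dν(y) dμ(x) for every integer k ≥ 1. -/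
/-!
Write `t = ν(E_x)`. Hölder's inequality on `E_x` gives
`|∫_{E_x} f(x,·)|^p ≤ t^(p-1) ∫_Y |f(x,·)|^p`, and the weight absorbs the factor `t^(p-1)`:
`(1-t)^k ≤ e^(-kt)`, while `u ≤ e^u` at `u = kt/(p-1)` gives `(kt)^(p-1) ≤ (p-1)^(p-1) e^(kt)`,
so `(1-t)^k t^(p-1) ≤ ((p-1)/k)^(p-1)`. Integrating this pointwise bound over `x` gives the claim.
-/

open MeasureTheory Set
open scoped ENNReal

namespace Real

theorem rpow_le_rpow_mul_exp {a s : ℝ} (ha : 0 < a) (hs : 0 ≤ s) :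
    s ^ a ≤ a ^ a * exp s := by
  calc s ^ a = a ^ a * (s / a) ^ a := by
        rw [div_rpow hs ha.le, mul_div_cancel₀ _ (rpow_pos_of_pos ha a).ne']
    _ ≤ a ^ a * exp (s / a) ^ a := by
        gcongr
        linarith [add_one_le_exp (s / a)]
    _ = a ^ a * exp s := by rw [← exp_mul, div_mul_cancel₀ _ ha.ne']

theorem one_sub_pow_mul_rpow_le {k : ℕ} (hk : 0 < k) {a t : ℝ} (ha : 0 < a)
    (ht₀ : 0 ≤ t) (ht₁ : t ≤ 1) :
    (1 - t) ^ k * t ^ a ≤ (a / k) ^ a := by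
  have hk' : (0 : ℝ) < k := Nat.cast_pos.mpr hk
  have hkt : 0 ≤ k * t := mul_nonneg hk'.le ht₀
  have hexp : (1 - t) ^ k ≤ exp (-(k * t)) := by
    simpa [hk'.ne'] using one_sub_div_pow_le_exp_neg (n := k) (t := k * t)
      (by nlinarith)
  have hpow : t ^ a ≤ (a / k) ^ a * exp (k * t) := by
    calc t ^ a = (k * t) ^ a / (k : ℝ) ^ a := by
          rw [mul_rpow hk'.le ht₀, mul_div_cancel_left₀ _ (rpow_pos_of_pos hk' a).ne']
      _ ≤ a ^ a * exp (k * t) / (k : ℝ) ^ a := by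
          gcongr
          exact rpow_le_rpow_mul_exp ha hkt
      _ = (a / k) ^ a * exp (k * t) := by
          rw [div_rpow ha.le hk'.le]; ring
  calc (1 - t) ^ k * t ^ a ≤ exp (-(k * t)) * ((a / k) ^ a * exp (k * t)) := by
        gcongr
    _ = (a / k) ^ a := by
        rw [mul_left_comm, ← exp_add, neg_add_cancel, exp_zero, mul_one]

end Real

theorem enorm_setIntegral_rpow_le {α E : Type*} [MeasurableSpace α] [NormedAddCommGroup E]
    [NormedSpace ℝ E] (μ : Measure α) (s : Set α) (f : α → E) {p : ℝ} (hp : 1 ≤ p) :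
    ‖∫ x in s, f x ∂μ‖ₑ ^ p ≤ μ s ^ (p - 1) * ∫⁻ x in s, ‖f x‖ₑ ^ p ∂μ := by
  have hp₀ : 0 < p := by linarith
  by_cases hf : IntegrableOn f s μ
  swap
  · simp [integral_undef hf, ENNReal.zero_rpow_of_pos hp₀]
  have hHolder : ∫⁻ x in s, ‖f x‖ₑ ∂μ ≤
      eLpNorm f (ENNReal.ofReal p) (μ.restrict s) * μ s ^ (1 - 1 / p) := by
    have := eLpNorm_le_eLpNorm_mul_rpow_measure_univ (μ := μ.restrict s)
      (ENNReal.one_le_ofReal.mpr hp) hf.aestronglyMeasurable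
    simpa [eLpNorm_one_eq_lintegral_enorm, ENNReal.toReal_ofReal hp₀.le] using this
  have hLp : eLpNorm f (ENNReal.ofReal p) (μ.restrict s) ^ p = ∫⁻ x in s, ‖f x‖ₑ ^ p ∂μ := by
    rw [eLpNorm_eq_lintegral_rpow_enorm_toReal (by simpa using hp₀) ENNReal.ofReal_ne_top,
      ENNReal.toReal_ofReal hp₀.le, ← ENNReal.rpow_mul, one_div_mul_cancel hp₀.ne',
      ENNReal.rpow_one]
  calc ‖∫ x in s, f x ∂μ‖ₑ ^ p
      ≤ (eLpNorm f (ENNReal.ofReal p) (μ.restrict s) * μ s ^ (1 - 1 / p)) ^ p := by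
        gcongr
        exact (enorm_integral_le_lintegral_enorm _).trans hHolder
    _ = μ s ^ (p - 1) * ∫⁻ x in s, ‖f x‖ₑ ^ p ∂μ := by
        rw [ENNReal.mul_rpow_of_nonneg _ _ hp₀.le, hLp, ← ENNReal.rpow_mul, mul_comm,
          sub_mul, one_div_mul_cancel hp₀.ne', one_mul]

theorem ofReal_one_sub_pow_mul_norm_setIntegral_rpow_le {α E : Type*} [MeasurableSpace α]
    [NormedAddCommGroup E] [NormedSpace ℝ E] {μ : Measure α} {s : Set α} (hs : μ s ≤ 1)
    (f : α → E) {p : ℝ} (hp : 1 < p) {k : ℕ} (hk : 0 < k) :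
    ENNReal.ofReal ((1 - (μ s).toReal) ^ k * ‖∫ x in s, f x ∂μ‖ ^ p)
      ≤ ENNReal.ofReal (((p - 1) / k) ^ (p - 1)) * ∫⁻ x, ENNReal.ofReal (‖f x‖ ^ p) ∂μ := by
  have hp₀ : 0 ≤ p := by linarith
  set t := (μ s).toReal
  have ht₀ : 0 ≤ t := ENNReal.toReal_nonneg
  have ht₁ : t ≤ 1 := ENNReal.toReal_le_of_le_ofReal zero_le_one (by simpa using hs)
  have hμs : μ s = ENNReal.ofReal t :=
    (ENNReal.ofReal_toReal (hs.trans_lt ENNReal.one_lt_top).ne).symm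
  have hweight : 0 ≤ (1 - t) ^ k := pow_nonneg (by linarith) k
  simp_rw [ENNReal.ofReal_mul hweight, ← ENNReal.ofReal_rpow_of_nonneg (norm_nonneg _) hp₀,
    ofReal_norm]
  calc ENNReal.ofReal ((1 - t) ^ k) * ‖∫ x in s, f x ∂μ‖ₑ ^ p
      ≤ ENNReal.ofReal ((1 - t) ^ k) * (μ s ^ (p - 1) * ∫⁻ x, ‖f x‖ₑ ^ p ∂μ) := by
        gcongr
        exact (enorm_setIntegral_rpow_le μ s f hp.le).trans
          (by gcongr; exact Measure.restrict_le_self)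
    _ = ENNReal.ofReal ((1 - t) ^ k * t ^ (p - 1)) * ∫⁻ x, ‖f x‖ₑ ^ p ∂μ := by
        rw [hμs, ENNReal.ofReal_rpow_of_nonneg ht₀ (by linarith), ← mul_assoc,
          ← ENNReal.ofReal_mul hweight]
    _ ≤ ENNReal.ofReal (((p - 1) / k) ^ (p - 1)) * ∫⁻ x, ‖f x‖ₑ ^ p ∂μ := by
        gcongr
        exact Real.one_sub_pow_mul_rpow_le hk (by linarith) ht₀ ht₁

theorem stmt10_general {X Y : Type*} [MeasurableSpace X] [MeasurableSpace Y]
    (μ : Measure X) (ν : Measure Y) [IsProbabilityMeasure ν]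
    (p : ℝ) (hp : 1 < p)
    (E : X → Set Y)
    (f : X → Y → ℂ)
    (k : ℕ) (hk : 1 ≤ k) :
    (∫⁻ x, ENNReal.ofReal
        ((1 - (ν (E x)).toReal) ^ k * ‖∫ y in E x, f x y ∂ν‖ ^ p) ∂μ)
      ≤ ENNReal.ofReal (((p - 1) / k) ^ (p - 1))
          * ∫⁻ x, ∫⁻ y, ENNReal.ofReal (‖f x y‖ ^ p) ∂ν ∂μ := by
  rw [← lintegral_const_mul' _ _ ENNReal.ofReal_ne_top]
  exact lintegral_mono fun x =>
    ofReal_one_sub_pow_mul_norm_setIntegral_rpow_le prob_le_one (f x) hp hk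

/-- **Key estimate in the Minkowski inequality with exceptional sets:**
`∫_X (1−ν(E_x))^k |∫_{E_x} f(x,y) dν(y)|^p dμ(x)
  ≤ ((p−1)/k)^{p−1} ∫_X ∫_Y |f(x,y)|^p dν(y) dμ(x)` for every integer `k ≥ 1`. -/
theorem stmt10 {X Y : Type*} [MeasurableSpace X] [MeasurableSpace Y]
    (μ : Measure X) (ν : Measure Y) [IsProbabilityMeasure ν]
    (p : ℝ) (hp : 1 < p)
    (E : X → Set Y)
    (hE : MeasurableSet {q : X × Y | q.2 ∈ E q.1})
    (f : X → Y → ℂ)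
    (hf : Measurable fun q : X × Y => f q.1 q.2)
    (k : ℕ) (hk : 1 ≤ k) :
    (∫⁻ x, ENNReal.ofReal
        ((1 - (ν (E x)).toReal) ^ k * ‖∫ y in E x, f x y ∂ν‖ ^ p) ∂μ)
      ≤ ENNReal.ofReal (((p - 1) / k) ^ (p - 1))
          * ∫⁻ x, ∫⁻ y, ENNReal.ofReal (‖f x y‖ ^ p) ∂ν ∂μ :=
  stmt10_general μ ν p hp E f k hk
end
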